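/- arXiv:1709.02615 — 2 statements merged into one kernel-verified Lean document; each statement's English description precedes it below -/
import Mathlib

section
/- For the 2×2 system with flux potential K(u,v), the characteristic velocity μ = (1/2)·d²K̄/du² of the equilibrium subsystem, where K̄(u) = K(u,u), satisfies P_E(μ) = -(1/4)·(K_uu(u,u) - K_vv(u,u))² ≤ 0, where P_E(λ) = λ² - (K_uu + K_vv)|_{v=u}·λ + (K_uu·K_vv - K_uv²)|_{v=u} is the characteristic polynomial of the full system evaluated at equilibrium. -/
/-!
By the chain rule along the lines `x ↦ (x, u)`, `y ↦ (u, y)` and `x ↦ (x, x)`, the three partials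
`K_uu`, `K_uv`, `K_vv` and `K̄''(u)` are values of the Hessian `B` of `K` at `(u, u)`; since `B` is
symmetric (Schwarz), `K̄'' = B (1,1) (1,1) = K_uu + 2 K_uv + K_vv`. With `μ` half of this,
`P_E(μ) = -(K_uu - K_vv)² / 4` is a polynomial identity.
-/

section ChainRule

variable {E F : Type*} [NormedAddCommGroup E] [NormedSpace ℝ E]
  [NormedAddCommGroup F] [NormedSpace ℝ F]

theorem deriv_comp_eq_fderiv_apply {f : E → F} (hf : Differentiable ℝ f) {γ : ℝ → E} {v : E}
    (hγ : ∀ t, HasDerivAt γ v t) :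
    deriv (fun t => f (γ t)) = fun t => fderiv ℝ f (γ t) v :=
  funext fun t => ((hf (γ t)).hasFDerivAt.comp_hasDerivAt t (hγ t)).deriv

theorem hasDerivAt_fderiv_apply_comp {γ : ℝ → E} {w : E} {s : ℝ} (hγ : HasDerivAt γ w s)
    {f : E → F} {B : E →L[ℝ] E →L[ℝ] F} (hB : HasFDerivAt (fderiv ℝ f) B (γ s)) (v : E) :
    HasDerivAt (fun s => fderiv ℝ f (γ s) v) (B w v) s :=
  (ContinuousLinearMap.apply ℝ F v).hasFDerivAt.comp_hasDerivAt s (hB.comp_hasDerivAt s hγ)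

end ChainRule

section SecondPartials

variable {F : Type*} [NormedAddCommGroup F] [NormedSpace ℝ F]

theorem hasDerivAt_prodMk_id_const (u x : ℝ) :
    HasDerivAt (fun x : ℝ => (x, u)) ((1 : ℝ), (0 : ℝ)) x :=
  (hasDerivAt_id x).prodMk (hasDerivAt_const x u)

theorem hasDerivAt_prodMk_const_id (u y : ℝ) :
    HasDerivAt (fun y : ℝ => (u, y)) ((0 : ℝ), (1 : ℝ)) y :=
  (hasDerivAt_const y u).prodMk (hasDerivAt_id y)

theorem hasDerivAt_prodMk_id_id (x : ℝ) :
    HasDerivAt (fun x : ℝ => (x, x)) ((1 : ℝ), (1 : ℝ)) x :=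
  (hasDerivAt_id x).prodMk (hasDerivAt_id x)

theorem deriv_deriv_diag_eq {K : ℝ → ℝ → F} (hK : ContDiff ℝ 2 (fun p : ℝ × ℝ => K p.1 p.2))
    (u : ℝ) :
    deriv (deriv (fun x => K x x)) u =
      deriv (fun x => deriv (fun x' => K x' u) x) u
        + (2 : ℝ) • deriv (fun y => deriv (fun x' => K x' y) u) u
        + deriv (fun y => deriv (fun y' => K u y') y) u := by
  set f : ℝ × ℝ → F := fun p => K p.1 p.2
  have hf : Differentiable ℝ f := hK.differentiable (by norm_num)
  have hB : HasFDerivAt (fderiv ℝ f) (fderiv ℝ (fderiv ℝ f) (u, u)) (u, u) :=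
    ((hK.fderiv_right (m := 1) (by norm_num)).differentiable (by norm_num) _).hasFDerivAt
  set B := fderiv ℝ (fderiv ℝ f) (u, u)
  have hsymm : B (1, 0) (0, 1) = B (0, 1) (1, 0) :=
    hK.contDiffAt.isSymmSndFDerivAt (by simp) _ _
  have hdiag : deriv (deriv (fun x => K x x)) u = B (1, 1) (1, 1) := by
    rw [deriv_comp_eq_fderiv_apply hf hasDerivAt_prodMk_id_id]
    exact (hasDerivAt_fderiv_apply_comp (hasDerivAt_prodMk_id_id u) hB _).deriv
  have huu : deriv (fun x => deriv (fun x' => K x' u) x) u = B (1, 0) (1, 0) := by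
    rw [deriv_comp_eq_fderiv_apply hf (hasDerivAt_prodMk_id_const u)]
    exact (hasDerivAt_fderiv_apply_comp (hasDerivAt_prodMk_id_const u u) hB _).deriv
  have huv : deriv (fun y => deriv (fun x' => K x' y) u) u = B (0, 1) (1, 0) := by
    have hinner : (fun y => deriv (fun x' => K x' y) u) = fun y => fderiv ℝ f (u, y) (1, 0) :=
      funext fun y => congrFun (deriv_comp_eq_fderiv_apply hf (hasDerivAt_prodMk_id_const y)) u
    rw [hinner]
    exact (hasDerivAt_fderiv_apply_comp (hasDerivAt_prodMk_const_id u u) hB _).deriv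
  have hvv : deriv (fun y => deriv (fun y' => K u y') y) u = B (0, 1) (0, 1) := by
    rw [deriv_comp_eq_fderiv_apply hf (hasDerivAt_prodMk_const_id u)]
    exact (hasDerivAt_fderiv_apply_comp (hasDerivAt_prodMk_const_id u u) hB _).deriv
  have hsplit : ((1 : ℝ), (1 : ℝ)) = ((1 : ℝ), (0 : ℝ)) + ((0 : ℝ), (1 : ℝ)) := by simp
  rw [hdiag, huu, huv, hvv, hsplit]
  simp only [map_add, add_apply, hsymm]
  module

end SecondPartials

/-- P_E(μ) = -(1/4)(K_uu - K_vv)|_E² ≤ 0 for the equilibrium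
subsystem characteristic velocity μ = (1/2)K̄''(u), K̄(u) = K(u,u). -/
theorem stmt_0 (K : ℝ → ℝ → ℝ) (hK : ContDiff ℝ 2 (fun p : ℝ × ℝ => K p.1 p.2))
    (u : ℝ)
    (Kuu Kuv Kvv : ℝ)
    (hKuu : Kuu = deriv (fun x => deriv (fun x' => K x' u) x) u)
    (hKuv : Kuv = deriv (fun y => deriv (fun x' => K x' y) u) u)
    (hKvv : Kvv = deriv (fun y => deriv (fun y' => K u y') y) u)
    (μ : ℝ) (hμ : μ = (1/2) * deriv (deriv (fun x => K x x)) u)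
    (PE : ℝ → ℝ)
    (hPE : ∀ lam, PE lam = lam ^ 2 - (Kuu + Kvv) * lam + (Kuu * Kvv - Kuv ^ 2)) :
    PE μ = -(1/4) * (Kuu - Kvv) ^ 2 ∧ PE μ ≤ 0 := by
  have hμ' : μ = (1/2) * (Kuu + 2 * Kuv + Kvv) := by
    rw [hμ, deriv_deriv_diag_eq hK u, hKuu, hKuv, hKvv, smul_eq_mul]
  have hPEμ : PE μ = -(1/4) * (Kuu - Kvv) ^ 2 := by
    rw [hPE, hμ']
    ring
  refine ⟨hPEμ, ?_⟩
  rw [hPEμ]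
  nlinarith [sq_nonneg (Kuu - Kvv)]
end

section
/- For the K-condition of the 2×2 system: if K_uv(u,u) ≠ 0 at an equilibrium point, then the Shizuta-Kawashima condition δu - δv ≠ 0 holds for both characteristic eigenvectors if and only if K_uu(u,u) ≠ K_vv(u,u). Equivalently, P_E(ω) ≠ 0 where ω = K_uu(u,u) + K_uv(u,u), since P_E(ω) = K_uv(u,u)·(K_uu(u,u) - K_vv(u,u)). -/
/-- with a = K_uu|_E, b = K_uv|_E ≠ 0, c = K_vv|_E and
P_E(λ) = λ² - (a+c)λ + ac - b², one has P_E(a+b) = b(a-c), and the K-condition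
(no equilibrium eigenvalue equals ω = a + b) holds iff a ≠ c. -/
theorem stmt_13 (a b c : ℝ) (hb : b ≠ 0) :
    ((a + b) ^ 2 - (a + c) * (a + b) + (a * c - b ^ 2) = b * (a - c)) ∧
    ((∀ lam : ℝ, lam ^ 2 - (a + c) * lam + (a * c - b ^ 2) = 0 → lam ≠ a + b) ↔
      a ≠ c) := by
  constructor
  · ring
  · constructor
    · intro h hac
      exact h (a + b) (by rw [hac]; ring) rfl
    · intro hac lam hroot heq
      apply hac
      have : b * (a - c) = 0 := by rw [← hroot, heq]; ring
      have := (mul_eq_zero.mp this).resolve_left hb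
      linarith
end
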